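/- arXiv:2201.12273 — 7 statements merged into one kernel-verified Lean document; each statement's English description precedes it below -/
import Mathlib

section
/- Consider a (p,q)-crowning connecting two distinct vertices a and b: a base path P⁰ of length p+1 from a to b, and two crown paths P¹, P² each of length q+1 from a to b, with internal vertices of the three paths pairwise disjoint, together with crown habitats H₁ = V(P⁰) ∪ V(P¹) and H₂ = V(P⁰) ∪ V(P²). Then the minimum number of edges in a set F satisfying both H₁ and H₂ equals p + 2q + 1. -/
/-!
The optimum keeps the base path and each crown path minus its edge at `a`; since `a` lies on
the base path, both habitats stay connected, and the three edge lists are disjoint.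

For the lower bound, a connected habitat on `n` vertices uses at least `n - 1` edges of `F`
with both ends inside it. Each habitat has `p + q + 2` vertices, and an edge inside both
habitats lies on the base path, because an edge of a crown path inside the other habitat joins
`a` to `b`, which a crown path of length `q + 1 ≥ 2` does not contain. Hence
`|F| ≥ 2 (p + q + 1) - (p + 1)`; when `q = 0` a single habitat already gives `|F| ≥ p + 1`.
-/

open SimpleGraph
open scoped Classical

def SatisfiesHab {V : Type*} (F : Set (Sym2 V)) (H : Set V) : Prop :=
  (∀ v ∈ H, ∃ e ∈ F, v ∈ e) ∧ ((SimpleGraph.fromEdgeSet F).induce H).Connected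

lemma List.ncard_setOf_mem {α : Type*} {l : List α} (hl : l.Nodup) :
    {x | x ∈ l}.ncard = l.length := by
  rw [← List.coe_toFinset, Set.ncard_coe_finset, List.toFinset_card_of_nodup hl]

namespace SimpleGraph

variable {V : Type*} {G : SimpleGraph V}

namespace Walk

lemma edges_disjoint_of_forall_mem_support_eq {u v u' v' w : V} (X : G.Walk u v)
    (Y : G.Walk u' v') (h : ∀ x ∈ X.support, x ∈ Y.support → x = w) :
    X.edges.Disjoint Y.edges := by
  intro e hX hY
  induction e using Sym2.ind with
  | _ x y =>
    have hx := h x (X.fst_mem_support_of_mem_edges hX) (Y.fst_mem_support_of_mem_edges hY)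
    have hy := h y (X.snd_mem_support_of_mem_edges hX) (Y.snd_mem_support_of_mem_edges hY)
    exact (X.adj_of_mem_edges hX).ne (hx.trans hy.symm)

lemma IsPath.length_eq_one_of_mem_edges_of_forall_mem {a b : V} {P : G.Walk a b}
    (hP : P.IsPath) {e : Sym2 V} (he : e ∈ P.edges) (h : ∀ v ∈ e, v = a ∨ v = b) :
    P.length = 1 := by
  induction e using Sym2.ind with
  | _ x y =>
    have hxy := (P.adj_of_mem_edges he).ne
    rcases h x (Sym2.mem_mk_left x y) with rfl | rfl <;>
      rcases h y (Sym2.mem_mk_right x y) with rfl | rfl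
    · exact absurd rfl hxy
    · exact hP.length_eq_one_of_mem_edges he
    · exact hP.length_eq_one_of_mem_edges (Sym2.eq_swap ▸ he)
    · exact absurd rfl hxy

lemma ncard_support {a b : V} {P : G.Walk a b} (hP : P.IsPath) :
    {v | v ∈ P.support}.ncard = P.length + 1 := by
  rw [List.ncard_setOf_mem hP.support_nodup, length_support]

lemma ncard_support_union {a b : V} {P Q : G.Walk a b} (hP : P.IsPath) (hQ : Q.IsPath)
    (hab : a ≠ b) (hd : ∀ v ∈ P.support, v ∈ Q.support → v = a ∨ v = b) :
    ({v | v ∈ P.support} ∪ {v | v ∈ Q.support}).ncard = P.length + Q.length := by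
  have hinter : {v | v ∈ P.support} ∩ {v | v ∈ Q.support} = {a, b} := by
    ext v
    constructor
    · exact fun ⟨hvP, hvQ⟩ => hd v hvP hvQ
    · rintro (rfl | rfl)
      exacts [⟨P.start_mem_support, Q.start_mem_support⟩, ⟨P.end_mem_support, Q.end_mem_support⟩]
  have := Set.ncard_union_add_ncard_inter {v | v ∈ P.support} {v | v ∈ Q.support}
    P.support.finite_toSet Q.support.finite_toSet
  rw [hinter, Set.ncard_pair hab, ncard_support hP, ncard_support hQ] at this
  omega

lemma connected_induce_support_fromEdgeSet {u v : V} {F : Set (Sym2 V)} (P : G.Walk u v)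
    (hP : ∀ e ∈ P.edges, e ∈ F) : ((fromEdgeSet F).induce {x | x ∈ P.support}).Connected := by
  have hP' : ∀ e ∈ P.edges, e ∈ (fromEdgeSet F).edgeSet := fun e he => by
    rw [edgeSet_fromEdgeSet]
    exact ⟨hP e he, G.not_isDiag_of_mem_edgeSet (P.edges_subset_edgeSet he)⟩
  have := (P.transfer _ hP').connected_induce_support
  rwa [support_transfer] at this

end Walk

lemma satisfiesHab_of_connected {F : Set (Sym2 V)} {H : Set V} (hH : H.Nontrivial)
    (hconn : ((fromEdgeSet F).induce H).Connected) : SatisfiesHab F H := by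
  refine ⟨fun v hv => ?_, hconn⟩
  have : Nontrivial H := hH.coe_sort
  obtain ⟨u, hu⟩ := hconn.preconnected.exists_adj_of_nontrivial ⟨v, hv⟩
  exact ⟨s(v, u), ((fromEdgeSet_adj F).mp hu).1, Sym2.mem_mk_left _ _⟩

lemma ncard_le_ncard_inter_sym2_add_one {F : Set (Sym2 V)} (hF : F.Finite) {H : Set V}
    (hconn : ((fromEdgeSet F).induce H).Connected) : H.ncard ≤ (F ∩ H.sym2).ncard + 1 := by
  have hmaps : ∀ e ∈ ((fromEdgeSet F).induce H).edgeSet,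
      Sym2.map Subtype.val e ∈ F ∩ H.sym2 := by
    intro e
    induction e using Sym2.ind with
    | _ x y => exact fun hxy => ⟨((fromEdgeSet_adj F).mp hxy).1, x.2, y.2⟩
  calc H.ncard = Nat.card H := (Nat.card_coe_set_eq H).symm
    _ ≤ Nat.card ((fromEdgeSet F).induce H).edgeSet + 1 :=
      hconn.card_vert_le_card_edgeSet_add_one
    _ ≤ (F ∩ H.sym2).ncard + 1 := by
      rw [Nat.card_coe_set_eq]
      gcongr
      exact Set.ncard_le_ncard_of_injOn _ hmaps
        (Sym2.map.injective Subtype.val_injective).injOn (hF.inter_of_left _)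

lemma ncard_add_ncard_le_of_inter_subset {F B : Set (Sym2 V)} {H₁ H₂ : Set V} (hF : F.Finite)
    (hB : B.Finite) (h₁ : ((fromEdgeSet F).induce H₁).Connected)
    (h₂ : ((fromEdgeSet F).induce H₂).Connected) (hFB : F ∩ H₁.sym2 ∩ (F ∩ H₂.sym2) ⊆ B) :
    H₁.ncard + H₂.ncard ≤ F.ncard + B.ncard + 2 := by
  have hunion := Set.ncard_union_add_ncard_inter (F ∩ H₁.sym2) (F ∩ H₂.sym2)
    (hF.inter_of_left _) (hF.inter_of_left _)
  have hF' : (F ∩ H₁.sym2 ∪ F ∩ H₂.sym2).ncard ≤ F.ncard :=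
    Set.ncard_le_ncard (Set.union_subset Set.inter_subset_left Set.inter_subset_left) hF
  have hB' := Set.ncard_le_ncard hFB hB
  have := ncard_le_ncard_inter_sym2_add_one hF h₁
  have := ncard_le_ncard_inter_sym2_add_one hF h₂
  omega

section Crowning

variable {a b : V}

lemma satisfiesHab_support_union_cons {F : Set (Sym2 V)} {c : V} (hab : a ≠ b)
    (P : G.Walk a b) (h : G.Adj a c) (W : G.Walk c b) (hP : ∀ e ∈ P.edges, e ∈ F)
    (hW : ∀ e ∈ W.edges, e ∈ F) :
    SatisfiesHab F ({v | v ∈ P.support} ∪ {v | v ∈ (Walk.cons h W).support}) := by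
  have hH : {v | v ∈ P.support} ∪ {v | v ∈ (Walk.cons h W).support} =
      {v | v ∈ P.support} ∪ {v | v ∈ W.support} := by
    ext v
    simp only [Walk.support_cons, List.mem_cons, Set.mem_union, Set.mem_ofPred_eq]
    constructor
    · rintro (hv | rfl | hv)
      exacts [.inl hv, .inl P.start_mem_support, .inr hv]
    · exact Or.imp_right .inr
  rw [hH]
  refine satisfiesHab_of_connected ⟨a, .inl P.start_mem_support, b, .inl P.end_mem_support, hab⟩ ?_
  exact induce_union_connected (P.connected_induce_support_fromEdgeSet hP).preconnected
    (W.connected_induce_support_fromEdgeSet hW).preconnected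
    ⟨b, P.end_mem_support, W.end_mem_support⟩

lemma exists_satisfiesHab_crowning {c₁ c₂ : V} (hab : a ≠ b) (P : G.Walk a b)
    (h₁ : G.Adj a c₁) (W₁ : G.Walk c₁ b) (h₂ : G.Adj a c₂) (W₂ : G.Walk c₂ b)
    (hP : P.IsPath) (hW₁ : (Walk.cons h₁ W₁).IsPath) (hW₂ : (Walk.cons h₂ W₂).IsPath)
    (d01 : ∀ v, v ∈ P.support → v ∈ (Walk.cons h₁ W₁).support → v = a ∨ v = b)
    (d02 : ∀ v, v ∈ P.support → v ∈ (Walk.cons h₂ W₂).support → v = a ∨ v = b)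
    (d12 : ∀ v, v ∈ (Walk.cons h₁ W₁).support → v ∈ (Walk.cons h₂ W₂).support →
      v = a ∨ v = b) :
    ∃ F : Set (Sym2 V),
      F ⊆ {e | e ∈ P.edges ∨ e ∈ (Walk.cons h₁ W₁).edges ∨ e ∈ (Walk.cons h₂ W₂).edges} ∧
      SatisfiesHab F ({v | v ∈ P.support} ∪ {v | v ∈ (Walk.cons h₁ W₁).support}) ∧
      SatisfiesHab F ({v | v ∈ P.support} ∪ {v | v ∈ (Walk.cons h₂ W₂).support}) ∧
      F.ncard = P.length + W₁.length + W₂.length := by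
  rw [Walk.cons_isPath_iff] at hW₁ hW₂
  have eq_b : ∀ {c} (W : G.Walk c b), a ∉ W.support → ∀ x ∈ W.support, x = a ∨ x = b → x = b :=
    fun _ ha x hx hx' => hx'.resolve_left (by rintro rfl; exact ha hx)
  have d₁ : P.edges.Disjoint W₁.edges := P.edges_disjoint_of_forall_mem_support_eq W₁
    fun x hx hx₁ => eq_b W₁ hW₁.2 x hx₁ (d01 x hx (by simp [hx₁]))
  have d₂ : P.edges.Disjoint W₂.edges := P.edges_disjoint_of_forall_mem_support_eq W₂
    fun x hx hx₂ => eq_b W₂ hW₂.2 x hx₂ (d02 x hx (by simp [hx₂]))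
  have d₁₂ : W₁.edges.Disjoint W₂.edges := W₁.edges_disjoint_of_forall_mem_support_eq W₂
    fun x hx₁ hx₂ => eq_b W₁ hW₁.2 x hx₁ (d12 x (by simp [hx₁]) (by simp [hx₂]))
  have hnd : (P.edges ++ W₁.edges ++ W₂.edges).Nodup :=
    (hP.edges_nodup.append hW₁.1.edges_nodup d₁).append hW₂.1.edges_nodup
      (List.disjoint_append_left.mpr ⟨d₂, d₁₂⟩)
  refine ⟨{e | e ∈ P.edges ++ W₁.edges ++ W₂.edges}, ?_, ?_, ?_, ?_⟩
  · intro e he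
    simp only [List.mem_append, Set.mem_ofPred_eq, Walk.edges_cons, List.mem_cons] at he ⊢
    tauto
  · exact satisfiesHab_support_union_cons hab P h₁ W₁ (by simp +contextual)
      (by simp +contextual)
  · exact satisfiesHab_support_union_cons hab P h₂ W₂ (by simp +contextual)
      (by simp +contextual)
  · rw [List.ncard_setOf_mem hnd]
    simp only [List.length_append, Walk.length_edges]

lemma inter_sym2_inter_subset_edges {P₀ P₁ P₂ : G.Walk a b} (h₁ : P₁.IsPath) (h₂ : P₂.IsPath)
    (l₁ : P₁.length ≠ 1) (l₂ : P₂.length ≠ 1)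
    (d01 : ∀ v, v ∈ P₀.support → v ∈ P₁.support → v = a ∨ v = b)
    (d02 : ∀ v, v ∈ P₀.support → v ∈ P₂.support → v = a ∨ v = b)
    (d12 : ∀ v, v ∈ P₁.support → v ∈ P₂.support → v = a ∨ v = b) {F : Set (Sym2 V)}
    (hF : F ⊆ {e | e ∈ P₀.edges ∨ e ∈ P₁.edges ∨ e ∈ P₂.edges}) :
    F ∩ ({v | v ∈ P₀.support} ∪ {v | v ∈ P₁.support}).sym2 ∩
      (F ∩ ({v | v ∈ P₀.support} ∪ {v | v ∈ P₂.support}).sym2) ⊆ {e | e ∈ P₀.edges} := by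
  rintro e ⟨⟨heF, he₁⟩, -, he₂⟩
  rcases hF heF with he | he | he
  · exact he
  · refine absurd (h₁.length_eq_one_of_mem_edges_of_forall_mem he fun v hv => ?_) l₁
    have hv₁ := Walk.mem_support_of_mem_edges he hv
    rcases Set.mem_sym2_iff_subset.mp he₂ hv with hv₀ | hv₂
    exacts [d01 v hv₀ hv₁, d12 v hv₁ hv₂]
  · refine absurd (h₂.length_eq_one_of_mem_edges_of_forall_mem he fun v hv => ?_) l₂
    have hv₂ := Walk.mem_support_of_mem_edges he hv
    rcases Set.mem_sym2_iff_subset.mp he₁ hv with hv₀ | hv₁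
    exacts [d02 v hv₀ hv₂, d12 v hv₁ hv₂]

lemma length_add_length_add_length_le_ncard_add_two {P₀ P₁ P₂ : G.Walk a b} (hab : a ≠ b)
    (h₀ : P₀.IsPath) (h₁ : P₁.IsPath) (h₂ : P₂.IsPath)
    (d01 : ∀ v, v ∈ P₀.support → v ∈ P₁.support → v = a ∨ v = b)
    (d02 : ∀ v, v ∈ P₀.support → v ∈ P₂.support → v = a ∨ v = b)
    (d12 : ∀ v, v ∈ P₁.support → v ∈ P₂.support → v = a ∨ v = b) {F : Set (Sym2 V)}
    (hF : F ⊆ {e | e ∈ P₀.edges ∨ e ∈ P₁.edges ∨ e ∈ P₂.edges})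
    (hF₁ : ((fromEdgeSet F).induce ({v | v ∈ P₀.support} ∪ {v | v ∈ P₁.support})).Connected)
    (hF₂ : ((fromEdgeSet F).induce ({v | v ∈ P₀.support} ∪ {v | v ∈ P₂.support})).Connected) :
    P₀.length + P₁.length + P₂.length ≤ F.ncard + 2 := by
  have hFfin : F.Finite := (P₀.edges ++ P₁.edges ++ P₂.edges).finite_toSet.subset fun e he => by
    have := hF he
    simp only [List.mem_append, Set.mem_ofPred_eq] at this ⊢
    tauto
  have n₁ := Walk.ncard_support_union h₀ h₁ hab d01
  have n₂ := Walk.ncard_support_union h₀ h₂ hab d02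
  have hFH₁ := ncard_le_ncard_inter_sym2_add_one hFfin hF₁
  have hFH₂ := ncard_le_ncard_inter_sym2_add_one hFfin hF₂
  by_cases hl : P₁.length = 1 ∨ P₂.length = 1
  · have hS₁ := Set.ncard_le_ncard
      (Set.inter_subset_left (t := ({v | v ∈ P₀.support} ∪ {v | v ∈ P₁.support}).sym2)) hFfin
    have hS₂ := Set.ncard_le_ncard
      (Set.inter_subset_left (t := ({v | v ∈ P₀.support} ∪ {v | v ∈ P₂.support}).sym2)) hFfin
    omega
  rw [not_or] at hl
  have := ncard_add_ncard_le_of_inter_subset hFfin P₀.edges.finite_toSet hF₁ hF₂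
    (inter_sym2_inter_subset_edges h₁ h₂ hl.1 hl.2 d01 d02 d12 hF)
  rw [n₁, n₂, List.ncard_setOf_mem h₀.edges_nodup, Walk.length_edges] at this
  omega

end Crowning

end SimpleGraph

/-- A `(p,q)`-crowning: `G` consists of three internally disjoint `a`–`b` paths,
a base path `P0` of length `p+1` and two crown paths `P1, P2` of length `q+1`.
With crown habitats `H₁ = V(P0) ∪ V(P1)` and `H₂ = V(P0) ∪ V(P2)`, the minimum
number of edges of a set satisfying both habitats is `p + 2q + 1`. -/
theorem stmt3 {V : Type*} (G : SimpleGraph V) (a b : V) (hab : a ≠ b) (p q : ℕ)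
    (P0 P1 P2 : G.Walk a b)
    (h0 : P0.IsPath) (h1 : P1.IsPath) (h2 : P2.IsPath)
    (l0 : P0.length = p + 1) (l1 : P1.length = q + 1) (l2 : P2.length = q + 1)
    (d01 : ∀ v, v ∈ P0.support → v ∈ P1.support → v = a ∨ v = b)
    (d02 : ∀ v, v ∈ P0.support → v ∈ P2.support → v = a ∨ v = b)
    (d12 : ∀ v, v ∈ P1.support → v ∈ P2.support → v = a ∨ v = b)
    (hE : G.edgeSet = {e | e ∈ P0.edges ∨ e ∈ P1.edges ∨ e ∈ P2.edges}) :
    IsLeast {n : ℕ | ∃ F : Set (Sym2 V), F ⊆ G.edgeSet ∧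
        SatisfiesHab F ({v | v ∈ P0.support} ∪ {v | v ∈ P1.support}) ∧
        SatisfiesHab F ({v | v ∈ P0.support} ∪ {v | v ∈ P2.support}) ∧
        F.ncard = n}
      (p + 2 * q + 1) := by
  rw [hE]
  constructor
  · obtain ⟨c₁, ha₁, W₁, rfl⟩ := Walk.exists_eq_cons_of_ne hab P1
    obtain ⟨c₂, ha₂, W₂, rfl⟩ := Walk.exists_eq_cons_of_ne hab P2
    obtain ⟨F, hF, hF₁, hF₂, hcard⟩ :=
      exists_satisfiesHab_crowning hab P0 ha₁ W₁ ha₂ W₂ h0 h1 h2 d01 d02 d12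
    simp only [Walk.length_cons] at l1 l2
    exact ⟨F, hF, hF₁, hF₂, by omega⟩
  · rintro n ⟨F, hF, ⟨-, hF₁⟩, ⟨-, hF₂⟩, rfl⟩
    have := length_add_length_add_length_le_ncard_add_two hab h0 h1 h2 d01 d02 d12 hF hF₁ hF₂
    omega
end

section
/- Let G be a cubic graph with vertex set V = {v₁,…,v_n} and edge set E = {e₁,…,e_m}, and build G' by adding a new vertex x adjacent to every v_i. Define habitats H_ℓ = e_ℓ and H'_ℓ = e_ℓ ∪ {x} for each edge e_ℓ ∈ E. Then G has a vertex cover of size at most p if and only if there is an edge set F ⊆ E(G') with |F| ≤ m + p satisfying every habitat (each H_ℓ and H'_ℓ induces a connected subgraph in G'[F] containing all its vertices). -/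
open SimpleGraph
open scoped Classical

/-- The graph `G'` obtained from `G` by adding a new vertex `none` adjacent to all
vertices of `G` (the old vertices are the `some v`). -/
def extGraph {V : Type*} (G : SimpleGraph V) : SimpleGraph (Option V) :=
  SimpleGraph.fromRel (fun a b => a = none ∨ ∃ u v, a = some u ∧ b = some v ∧ G.Adj u v)

lemma induce_adj_of_mem {W : Type*} (F : Set (Sym2 W)) (H : Set W) {a b : W}
    (ha : a ∈ H) (hb : b ∈ H) (hab : a ≠ b) (he : s(a,b) ∈ F) :
    ((fromEdgeSet F).induce H).Adj ⟨a, ha⟩ ⟨b, hb⟩ := by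
  simp [SimpleGraph.fromEdgeSet_adj, hab, he]

lemma first_step {W : Type*} (F : Set (Sym2 W)) (H : Set W)
    (a b : H) (hr : ((SimpleGraph.fromEdgeSet F).induce H).Reachable a b)
    (hne : a ≠ b) :
    ∃ c : H, c ≠ a ∧ s((a : W), (c : W)) ∈ F := by
  obtain ⟨w⟩ := hr
  cases w with
  | nil => exact absurd rfl hne
  | cons h p =>
    rename_i c
    have h' := h
    simp only [SimpleGraph.comap_adj, SimpleGraph.fromEdgeSet_adj] at h'
    exact ⟨c, fun hc => h.ne (by rw [hc]), h'.1⟩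


/-- Reduction from Cubic Vertex Cover: `G` cubic has a vertex cover of size at most `p`
iff there is `F ⊆ E(G')` with `|F| ≤ m + p` satisfying all habitats `Hₗ = eₗ` and
`H'ₗ = eₗ ∪ {x}` (where `x = none` is the new universal vertex). -/
theorem stmt4 {V : Type*} [Fintype V] (G : SimpleGraph V)
    (hcubic : ∀ v, (G.neighborSet v).ncard = 3) (p : ℕ) :
    (∃ C : Set V, C.ncard ≤ p ∧ ∀ e ∈ G.edgeSet, ∃ v ∈ C, v ∈ e) ↔
    (∃ F : Set (Sym2 (Option V)), F ⊆ (extGraph G).edgeSet ∧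
      F.ncard ≤ G.edgeSet.ncard + p ∧
      ∀ e ∈ G.edgeSet,
        SatisfiesHab F {a | ∃ v ∈ e, a = some v} ∧
        SatisfiesHab F (insert none {a | ∃ v ∈ e, a = some v})) := by
  constructor
  · rintro ⟨C, hCp, hcov⟩
    set L : Set (Sym2 (Option V)) := Sym2.map some '' G.edgeSet with hLdef
    set A : Set (Sym2 (Option V)) := (fun w => s((none : Option V), some w)) '' C with hAdef
    refine ⟨L ∪ A, ?_, ?_, ?_⟩
    · rintro e' (⟨e, he, rfl⟩ | ⟨w, hw, rfl⟩)
      · induction e using Sym2.ind with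
        | _ u v =>
          rw [SimpleGraph.mem_edgeSet] at he
          rw [Sym2.map_pair_eq, SimpleGraph.mem_edgeSet]
          simp only [extGraph, SimpleGraph.fromRel_adj]
          exact ⟨by simpa using he.ne, Or.inl (Or.inr ⟨u, v, rfl, rfl, he⟩)⟩
      · rw [SimpleGraph.mem_edgeSet]
        simp only [extGraph, SimpleGraph.fromRel_adj]
        exact ⟨by simp, Or.inl (Or.inl trivial)⟩
    · calc (L ∪ A).ncard ≤ L.ncard + A.ncard := Set.ncard_union_le _ _
        _ ≤ G.edgeSet.ncard + p := by
            have h1 : L.ncard = G.edgeSet.ncard :=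
              Set.ncard_image_of_injective _ (Sym2.map.injective (Option.some_injective V))
            have h2 : A.ncard ≤ C.ncard := Set.ncard_image_le C.toFinite
            omega
    · intro e he
      induction e using Sym2.ind with
      | _ u v =>
        rw [SimpleGraph.mem_edgeSet] at he
        have hLe : s((some u : Option V), some v) ∈ L ∪ A := by
          refine Or.inl ⟨s(u, v), he, ?_⟩
          rw [Sym2.map_pair_eq]
        set H : Set (Option V) := {a | ∃ w ∈ s(u, v), a = some w} with hHdef
        have hu : some u ∈ H := ⟨u, by simp, rfl⟩
        have hv : some v ∈ H := ⟨v, by simp, rfl⟩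
        have hmem : ∀ a ∈ H, a = some u ∨ a = some v := by
          rintro a ⟨w, hw, rfl⟩
          rw [Sym2.mem_iff] at hw
          rcases hw with rfl | rfl
          · exact Or.inl rfl
          · exact Or.inr rfl
        have huv : (some u : Option V) ≠ some v := by simpa using he.ne
        constructor
        · constructor
          · intro a ha
            rcases hmem a ha with rfl | rfl
            · exact ⟨_, hLe, by simp⟩
            · exact ⟨_, hLe, by simp⟩
          · rw [SimpleGraph.connected_iff]
            refine ⟨?_, ⟨⟨some u, hu⟩⟩⟩
            have key : ∀ a : H, ((fromEdgeSet (L ∪ A)).induce H).Reachable a ⟨some u, hu⟩ := by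
              rintro ⟨a, ha⟩
              rcases hmem a ha with rfl | rfl
              · rfl
              · exact (induce_adj_of_mem _ _ hv hu huv.symm
                  (by rwa [Sym2.eq_swap] at hLe)).reachable
            intro a b
            exact (key a).trans (key b).symm
        · -- triangle habitat
          obtain ⟨w, hwC, hwe⟩ := hcov s(u, v) (by rwa [SimpleGraph.mem_edgeSet])
          have hAw : s((none : Option V), some w) ∈ L ∪ A := Or.inr ⟨w, hwC, rfl⟩
          have hnone : (none : Option V) ∈ insert none H := Set.mem_insert _ _
          have hu' : (some u : Option V) ∈ insert none H := Set.mem_insert_of_mem _ hu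
          have hv' : (some v : Option V) ∈ insert none H := Set.mem_insert_of_mem _ hv
          constructor
          · intro a ha
            rcases ha with rfl | ha
            · exact ⟨_, hAw, by simp⟩
            · rcases hmem a ha with rfl | rfl
              · exact ⟨_, hLe, by simp⟩
              · exact ⟨_, hLe, by simp⟩
          · rw [SimpleGraph.connected_iff]
            refine ⟨?_, ⟨⟨some u, hu'⟩⟩⟩
            have hadjuv : ((fromEdgeSet (L ∪ A)).induce (insert none H)).Adj
                ⟨some v, hv'⟩ ⟨some u, hu'⟩ :=
              induce_adj_of_mem _ _ hv' hu' huv.symm (by rwa [Sym2.eq_swap] at hLe)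
            have hreachnone : ((fromEdgeSet (L ∪ A)).induce (insert none H)).Reachable
                ⟨none, hnone⟩ ⟨some u, hu'⟩ := by
              rw [Sym2.mem_iff] at hwe
              rcases hwe with rfl | rfl
              · exact (induce_adj_of_mem _ _ hnone hu' (by simp) hAw).reachable
              · exact ((induce_adj_of_mem _ _ hnone hv' (by simp) hAw).reachable).trans
                  hadjuv.reachable
            have key : ∀ a : (insert none H : Set (Option V)),
                ((fromEdgeSet (L ∪ A)).induce (insert none H)).Reachable a ⟨some u, hu'⟩ := by
              rintro ⟨a, ha⟩
              rcases ha with rfl | ha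
              · exact hreachnone
              · rcases hmem a ha with rfl | rfl
                · rfl
                · exact hadjuv.reachable
            intro a b
            exact (key a).trans (key b).symm
  · rintro ⟨F, hFsub, hFcard, hhab⟩
    set C : Set V := {w | s((none : Option V), some w) ∈ F} with hCdef
    have hmemH : ∀ u v : V, ∀ a ∈ ({a | ∃ w ∈ s(u, v), a = some w} : Set (Option V)),
        a = some u ∨ a = some v := by
      rintro u v a ⟨w, hw, rfl⟩
      rw [Sym2.mem_iff] at hw
      rcases hw with rfl | rfl
      · exact Or.inl rfl
      · exact Or.inr rfl
    -- F contains all lifted edges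
    have hLsub : Sym2.map some '' G.edgeSet ⊆ F := by
      rintro e' ⟨e, he, rfl⟩
      induction e using Sym2.ind with
      | _ u v =>
        have he' := he
        rw [SimpleGraph.mem_edgeSet] at he'
        obtain ⟨hsat, hconn⟩ := (hhab _ he).1
        set H : Set (Option V) := {a | ∃ w ∈ s(u, v), a = some w} with hHdef
        have hu : some u ∈ H := ⟨u, by simp, rfl⟩
        have hv : some v ∈ H := ⟨v, by simp, rfl⟩
        have hne : (⟨some u, hu⟩ : H) ≠ ⟨some v, hv⟩ := by
          simp [Subtype.ext_iff]
          exact he'.ne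
        obtain ⟨c, hcne, hcF⟩ := first_step F H ⟨some u, hu⟩ ⟨some v, hv⟩
          (hconn.preconnected _ _) hne
        rcases hmemH u v c c.2 with hc | hc
        · exact absurd (Subtype.ext hc) hcne
        · rw [Sym2.map_pair_eq]
          rw [hc] at hcF
          exact hcF
    -- the cover property
    refine ⟨C, ?_, ?_⟩
    · set L : Set (Sym2 (Option V)) := Sym2.map some '' G.edgeSet with hLdef
      set A : Set (Sym2 (Option V)) := (fun w => s((none : Option V), some w)) '' C with hAdef
      have hAsub : A ⊆ F := by rintro e' ⟨w, hw, rfl⟩; exact hw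
      have hdisj : Disjoint L A := by
        rw [Set.disjoint_left]
        rintro e' ⟨e, he, rfl⟩ ⟨w, hw, heq⟩
        have h1 : (none : Option V) ∈ Sym2.map some e := by rw [← heq]; simp
        rw [Sym2.mem_map] at h1
        obtain ⟨b, _, hb⟩ := h1
        exact Option.some_ne_none b hb
      have hunion : (L ∪ A).ncard ≤ F.ncard :=
        Set.ncard_le_ncard (Set.union_subset hLsub hAsub) F.toFinite
      have hsum : (L ∪ A).ncard = L.ncard + A.ncard := Set.ncard_union_eq hdisj
      have hL : L.ncard = G.edgeSet.ncard :=
        Set.ncard_image_of_injective _ (Sym2.map.injective (Option.some_injective V))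
      have hA : A.ncard = C.ncard := by
        apply Set.ncard_image_of_injective
        intro a b h
        simpa [Sym2.eq_iff] using h
      omega
    · intro e he
      induction e using Sym2.ind with
      | _ u v =>
        have he' := he
        rw [SimpleGraph.mem_edgeSet] at he'
        obtain ⟨hsat, hconn⟩ := (hhab _ he).2
        set H : Set (Option V) := insert none {a | ∃ w ∈ s(u, v), a = some w} with hHdef
        have hnone : (none : Option V) ∈ H := Set.mem_insert _ _
        have hu : (some u : Option V) ∈ H := Set.mem_insert_of_mem _ ⟨u, by simp, rfl⟩
        have hne : (⟨none, hnone⟩ : H) ≠ ⟨some u, hu⟩ := by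
          simp [Subtype.ext_iff]
        obtain ⟨c, hcne, hcF⟩ := first_step F H ⟨none, hnone⟩ ⟨some u, hu⟩
          (hconn.preconnected _ _) hne
        have hc : (c : Option V) ≠ none := by
          intro h
          exact hcne (Subtype.ext h)
        rcases c.2 with h0 | h0
        · exact absurd h0 hc
        · rcases hmemH u v c h0 with hceq | hceq
          · refine ⟨u, ?_, by simp⟩
            rw [hceq] at hcF
            exact hcF
          · refine ⟨v, ?_, by simp⟩
            rw [hceq] at hcF
            exact hcF
end

section
/- Let G be a cubic graph with V = {v₁,…,v_n}, E = {e₁,…,e_m}. Construct G' with vertex set V ∪ {x,y} and edges {{x,v_i}, {y,v_i} : 1 ≤ i ≤ n}. Define habitats H_i = {v_i, x} for each i, and H'_ℓ = e_ℓ ∪ {x, y} for each e_ℓ ∈ E. Then G has a vertex cover of size at most p if and only if there exists F ⊆ E(G') of size at most n + p satisfying all habitats. -/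
open SimpleGraph
open scoped Classical

/-- The complete bipartite-type graph on `V ⊕ Bool` with parts `{x, y}` (the two
`Sum.inr` vertices, `x = Sum.inr true`, `y = Sum.inr false`) and `V`, and all edges
between the parts. -/
def starsGraph (V : Type*) : SimpleGraph (V ⊕ Bool) :=
  SimpleGraph.fromRel (fun a b => ∃ v c, a = Sum.inl v ∧ b = Sum.inr c)

/-! Every vertex habitat `{v, x}` forces its spoke `v – x` into `F`, which costs `n` edges.
In a connected edge habitat `e ∪ {x, y}` the vertex `y` needs a spoke in `F`, necessarily to an
endpoint of `e`, so the endpoints of the spokes at `y` form a vertex cover. Conversely a vertex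
cover `C` yields the `n + |C|` spokes `V – x` and `C – y`, with `x` as a hub of every habitat. -/

section Habitats

variable {W : Type*}

lemma exists_mem_adj_of_induce_connected {G : SimpleGraph W} {H : Set W}
    (hconn : (G.induce H).Connected) (hH : H.Nontrivial) {a : W} (ha : a ∈ H) :
    ∃ c ∈ H, G.Adj a c := by
  have := Set.nontrivial_coe_sort.mpr hH
  obtain ⟨⟨c, hc⟩, hac⟩ := hconn.preconnected.exists_adj_of_nontrivial ⟨a, ha⟩
  exact ⟨c, hc, hac⟩

lemma induce_connected_of_hub {G : SimpleGraph W} {H : Set W} {h : W} (hh : h ∈ H)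
    (hnear : ∀ a ∈ H, a = h ∨ G.Adj a h ∨ ∃ b ∈ H, G.Adj a b ∧ G.Adj b h) :
    (G.induce H).Connected := by
  have reach {u v : H} (huv : G.Adj u v) : (G.induce H).Reachable u v := Adj.reachable huv
  refine (connected_iff_exists_forall_reachable _).2 ⟨⟨h, hh⟩, fun ⟨a, ha⟩ => Reachable.symm ?_⟩
  rcases hnear a ha with rfl | hah | ⟨b, hb, hab, hbh⟩
  · rfl
  · exact reach (u := ⟨a, ha⟩) (v := ⟨h, hh⟩) hah
  · exact (reach (u := ⟨a, ha⟩) (v := ⟨b, hb⟩) hab).trans (reach (v := ⟨h, hh⟩) hbh)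

namespace SatisfiesHab

variable {F : Set (Sym2 W)} {H : Set W}

lemma of_connected (hH : H.Nontrivial) (hconn : ((fromEdgeSet F).induce H).Connected) :
    SatisfiesHab F H := by
  refine ⟨fun a ha => ?_, hconn⟩
  obtain ⟨c, -, hac⟩ := exists_mem_adj_of_induce_connected hconn hH ha
  exact ⟨s(a, c), ((fromEdgeSet_adj _).1 hac).1, Sym2.mem_mk_left a c⟩

lemma exists_adj (h : SatisfiesHab F H) (hH : H.Nontrivial) {a : W} (ha : a ∈ H) :
    ∃ c ∈ H, (fromEdgeSet F).Adj a c :=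
  exists_mem_adj_of_induce_connected h.2 hH ha

end SatisfiesHab

lemma satisfiesHab_pair_iff {F : Set (Sym2 W)} {a b : W} (hab : a ≠ b) :
    SatisfiesHab F {a, b} ↔ s(a, b) ∈ F := by
  have hH : ({a, b} : Set W).Nontrivial := Set.nontrivial_pair hab
  constructor
  · intro h
    obtain ⟨c, hc, hac⟩ := h.exists_adj hH (Set.mem_insert a {b})
    rw [fromEdgeSet_adj] at hac
    rcases hc with rfl | rfl
    · exact absurd rfl hac.2
    · exact hac.1
  · intro hF
    refine .of_connected hH (induce_connected_of_hub (h := b) (by simp) ?_)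
    rintro c (rfl | rfl)
    · exact .inr (.inl ((fromEdgeSet_adj _).2 ⟨hF, hab⟩))
    · exact .inl rfl

end Habitats

section Stars

variable {V : Type*}

def spokes (c : Bool) (S : Set V) : Set (Sym2 (V ⊕ Bool)) :=
  (fun v => s(Sum.inl v, Sum.inr c)) '' S

lemma spoke_injective (c : Bool) :
    Function.Injective fun v : V => s(Sum.inl v, (Sum.inr c : V ⊕ Bool)) := by
  intro u w h
  simpa using h

lemma spokes_subset_edgeSet (c : Bool) (S : Set V) : spokes c S ⊆ (starsGraph V).edgeSet := by
  rintro _ ⟨v, -, rfl⟩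
  simp [starsGraph]

lemma ncard_spokes_union [Fintype V] (C : Set V) :
    (spokes true Set.univ ∪ spokes false C).ncard = Fintype.card V + C.ncard := by
  have hdisj : Disjoint (spokes true (Set.univ : Set V)) (spokes false C) := by
    rw [Set.disjoint_left]
    rintro _ ⟨u, -, rfl⟩ ⟨w, -, h⟩
    simp at h
  rw [Set.ncard_union_eq hdisj, spokes, spokes, Set.ncard_image_of_injective _ (spoke_injective _),
    Set.ncard_image_of_injective _ (spoke_injective _), Set.ncard_univ, Nat.card_eq_fintype_card]

lemma starsGraph_adj_inr {c : Bool} {a : V ⊕ Bool} :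
    (starsGraph V).Adj (Sum.inr c) a ↔ ∃ v, a = Sum.inl v := by
  cases a <;> simp [starsGraph]

def edgeHabitat (e : Sym2 V) : Set (V ⊕ Bool) :=
  {a | ∃ v ∈ e, a = Sum.inl v} ∪ {Sum.inr true, Sum.inr false}

lemma edgeHabitat_nontrivial (e : Sym2 V) : (edgeHabitat e).Nontrivial :=
  ⟨Sum.inr true, by simp [edgeHabitat], Sum.inr false, by simp [edgeHabitat], by simp⟩

lemma satisfiesHab_edgeHabitat {F : Set (Sym2 (V ⊕ Bool))} (hx : spokes true Set.univ ⊆ F)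
    {e : Sym2 V} {w : V} (hw : w ∈ e) (hwy : s(Sum.inl w, Sum.inr false) ∈ F) :
    SatisfiesHab F (edgeHabitat e) := by
  have hadjx : ∀ v : V, (fromEdgeSet F).Adj (Sum.inl v) (Sum.inr true) := fun v =>
    (fromEdgeSet_adj _).2 ⟨hx ⟨v, trivial, rfl⟩, Sum.inl_ne_inr⟩
  refine .of_connected (edgeHabitat_nontrivial e)
    (induce_connected_of_hub (h := Sum.inr true) (by simp [edgeHabitat]) ?_)
  rintro a (⟨v, -, rfl⟩ | rfl | rfl)
  · exact .inr (.inl (hadjx v))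
  · exact .inl rfl
  · refine .inr (.inr ⟨Sum.inl w, .inl ⟨w, hw, rfl⟩, ?_, hadjx w⟩)
    exact (fromEdgeSet_adj _).2 ⟨Sym2.eq_swap ▸ hwy, Sum.inr_ne_inl⟩

lemma exists_spoke_mem_of_satisfiesHab_edgeHabitat {F : Set (Sym2 (V ⊕ Bool))}
    (hF : F ⊆ (starsGraph V).edgeSet) {e : Sym2 V} (h : SatisfiesHab F (edgeHabitat e)) :
    ∃ v, s(Sum.inl v, Sum.inr false) ∈ F ∧ v ∈ e := by
  obtain ⟨c, hc, hyc⟩ := h.exists_adj (edgeHabitat_nontrivial e) (a := Sum.inr false)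
    (by simp [edgeHabitat])
  have hyc' := ((fromEdgeSet_adj _).1 hyc).1
  obtain ⟨v, rfl⟩ := starsGraph_adj_inr.1 (hF hyc')
  refine ⟨v, Sym2.eq_swap ▸ hyc', ?_⟩
  simpa [edgeHabitat] using hc

end Stars

theorem stmt5_general {V : Type*} [Fintype V] (G : SimpleGraph V) (p : ℕ) :
    (∃ C : Set V, C.ncard ≤ p ∧ ∀ e ∈ G.edgeSet, ∃ v ∈ C, v ∈ e) ↔
    (∃ F : Set (Sym2 (V ⊕ Bool)), F ⊆ (starsGraph V).edgeSet ∧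
      F.ncard ≤ Fintype.card V + p ∧
      (∀ v : V, SatisfiesHab F {Sum.inl v, Sum.inr true}) ∧
      (∀ e ∈ G.edgeSet,
        SatisfiesHab F ({a | ∃ v ∈ e, a = Sum.inl v} ∪ {Sum.inr true, Sum.inr false}))) := by
  constructor
  · rintro ⟨C, hCp, hC⟩
    refine ⟨spokes true Set.univ ∪ spokes false C,
      Set.union_subset (spokes_subset_edgeSet _ _) (spokes_subset_edgeSet _ _),
      by rw [ncard_spokes_union]; omega, fun v => ?_, fun e he => ?_⟩
    · exact (satisfiesHab_pair_iff Sum.inl_ne_inr).2 (.inl ⟨v, trivial, rfl⟩)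
    · obtain ⟨w, hwC, hwe⟩ := hC e he
      exact satisfiesHab_edgeHabitat Set.subset_union_left hwe (.inr ⟨w, hwC, rfl⟩)
  · rintro ⟨F, hFG, hFp, hvert, hedge⟩
    have hx : spokes true Set.univ ⊆ F := by
      rintro _ ⟨v, -, rfl⟩
      exact (satisfiesHab_pair_iff Sum.inl_ne_inr).1 (hvert v)
    refine ⟨{v | s(Sum.inl v, Sum.inr false) ∈ F}, ?_,
      fun e he => exists_spoke_mem_of_satisfiesHab_edgeHabitat hFG (hedge e he)⟩
    have hy : spokes false {v | s(Sum.inl v, Sum.inr false) ∈ F} ⊆ F := by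
      rintro _ ⟨v, hv, rfl⟩
      exact hv
    have hle := Set.ncard_le_ncard (Set.union_subset hx hy) (Set.toFinite F)
    rw [ncard_spokes_union] at hle
    omega

/-- Reduction from Cubic Vertex Cover: `G` cubic has a vertex cover of size at most `p`
iff there is `F ⊆ E(G')` of size at most `n + p` satisfying all habitats
`Hᵢ = {vᵢ, x}` and `H'ₗ = eₗ ∪ {x, y}`. -/
theorem stmt5 {V : Type*} [Fintype V] (G : SimpleGraph V)
    (hcubic : ∀ v, (G.neighborSet v).ncard = 3) (p : ℕ) :
    (∃ C : Set V, C.ncard ≤ p ∧ ∀ e ∈ G.edgeSet, ∃ v ∈ C, v ∈ e) ↔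
    (∃ F : Set (Sym2 (V ⊕ Bool)), F ⊆ (starsGraph V).edgeSet ∧
      F.ncard ≤ Fintype.card V + p ∧
      (∀ v : V, SatisfiesHab F {Sum.inl v, Sum.inr true}) ∧
      (∀ e ∈ G.edgeSet,
        SatisfiesHab F ({a | ∃ v ∈ e, a = Sum.inl v} ∪ {Sum.inr true, Sum.inr false}))) :=
  stmt5_general G p
end

section
/- Let G be a graph with edge costs, let every habitat in H = {H₁,…,H_r} induce a cycle in G, and let B be the associated habitat (multi-)hypergraph with bijection f from E(G) to E(B). If M is a matching in B (pairwise disjoint hyperedges), then for F = E(G) \ f⁻¹(M) and every habitat H ∈ H, the graph G[F][H] is connected. -/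
open SimpleGraph
open scoped Classical

def edgesIn {V : Type*} (G : SimpleGraph V) (H : Set V) : Set (Sym2 V) :=
  {e | e ∈ G.edgeSet ∧ ∀ v ∈ e, v ∈ H}

def IsCycleGraph {W : Type*} (G : SimpleGraph W) : Prop :=
  G.Connected ∧ ∀ v, (G.neighborSet v).ncard = 2

/-- The hyperedge of the habitat hypergraph `B` associated with an edge `e` of `G`:
the set of (indices of) habitats whose induced cycle contains `e`.  (Private auxiliary
vertices `b_e` for edges lying in a unique habitat never cause intersections, so the
matching condition of `B` is disjointness of these sets.) -/
def hyperOf {V : Type*} (G : SimpleGraph V) {r : ℕ} (Hs : Fin r → Set V)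
    (e : Sym2 V) : Set (Fin r) :=
  {i | e ∈ edgesIn G (Hs i)}

/-! In a finite cycle no edge is a bridge, so deleting at most one edge keeps it connected.
A matching of the habitat hypergraph meets each habitat `Hᵢ` in at most one edge, since any two
such edges share the vertex `bᵢ`. -/

namespace IsCycleGraph

variable {W : Type*} [Finite W] {C : SimpleGraph W}

lemma connected_deleteEdges_of_adj (hC : IsCycleGraph C) {a b : W} (hab : C.Adj a b) :
    (C.deleteEdges {s(a, b)}).Connected :=
  hC.1.connected_delete_edge_of_not_isBridge <| by
    rw [isBridge_iff, not_not]
    exact IsCycles.reachable_deleteEdges hab fun v _ => hC.2 v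

lemma connected_deleteEdges_of_subsingleton (hC : IsCycleGraph C) {S : Set (Sym2 W)}
    (hS : (S ∩ C.edgeSet).Subsingleton) : (C.deleteEdges S).Connected := by
  rw [deleteEdges_eq_inter_edgeSet]
  obtain hempty | ⟨e, he⟩ := hS.eq_empty_or_singleton
  · rw [hempty, deleteEdges_empty]
    exact hC.1
  · have hadj : e ∈ C.edgeSet := (he.symm.subset rfl).2
    induction e using Sym2.ind with
    | _ a b => rw [he]; exact hC.connected_deleteEdges_of_adj hadj

end IsCycleGraph

lemma induce_fromEdgeSet_sdiff {V : Type*} (G : SimpleGraph V) (M : Set (Sym2 V)) (s : Set V) :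
    (fromEdgeSet (G.edgeSet \ M)).induce s = (G.induce s).deleteEdges (Sym2.map (↑) ⁻¹' M) := by
  ext a b
  simp only [comap_adj, Function.Embedding.coe_subtype, fromEdgeSet_adj, Set.mem_sdiff,
    mem_edgeSet, deleteEdges_adj, Set.mem_preimage, Sym2.map_mk]
  exact ⟨fun ⟨h, _⟩ => h, fun h => ⟨h, h.1.ne⟩⟩

lemma mem_hyperOf_map_val {V : Type*} (G : SimpleGraph V) {r : ℕ} (Hs : Fin r → Set V) (i : Fin r)
    {e : Sym2 (Hs i)} (he : e ∈ (G.induce (Hs i)).edgeSet) :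
    i ∈ hyperOf G Hs (e.map (↑)) := by
  induction e using Sym2.ind with
  | _ a b =>
    refine ⟨he, fun v hv => ?_⟩
    rcases Sym2.mem_iff.mp hv with rfl | rfl
    exacts [a.2, b.2]

lemma subsingleton_preimage_inter_edgeSet_induce {V : Type*} (G : SimpleGraph V) {r : ℕ}
    (Hs : Fin r → Set V) (M : Set (Sym2 V))
    (hmatch : ∀ e ∈ M, ∀ e' ∈ M, e ≠ e' → Disjoint (hyperOf G Hs e) (hyperOf G Hs e'))
    (i : Fin r) : (Sym2.map (↑) ⁻¹' M ∩ (G.induce (Hs i)).edgeSet).Subsingleton := by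
  rintro e ⟨heM, he⟩ e' ⟨he'M, he'⟩
  refine Sym2.map.injective Subtype.val_injective (not_not.mp fun hne => ?_)
  exact (hmatch _ heM _ he'M hne).ne_of_mem (mem_hyperOf_map_val G Hs i he)
    (mem_hyperOf_map_val G Hs i he') rfl

theorem stmt6_general {V : Type*} [Fintype V] (G : SimpleGraph V) (r : ℕ) (Hs : Fin r → Set V)
    (hcyc : ∀ i, IsCycleGraph (G.induce (Hs i)))
    (M : Set (Sym2 V))
    (hmatch : ∀ e ∈ M, ∀ e' ∈ M, e ≠ e' → Disjoint (hyperOf G Hs e) (hyperOf G Hs e')) :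
    ∀ i, ((SimpleGraph.fromEdgeSet (G.edgeSet \ M)).induce (Hs i)).Connected := by
  intro i
  rw [induce_fromEdgeSet_sdiff]
  exact (hcyc i).connected_deleteEdges_of_subsingleton
    (subsingleton_preimage_inter_edgeSet_induce G Hs M hmatch i)

/-- If every habitat induces a cycle and `M` is a matching in the habitat hypergraph
(pairwise disjoint hyperedges), then for `F = E(G) \ M` the graph `G[F][Hᵢ]`
is connected for every habitat. -/
theorem stmt6 {V : Type*} [Fintype V] (G : SimpleGraph V) (r : ℕ) (Hs : Fin r → Set V)
    (c : Sym2 V → ℕ)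
    (hcyc : ∀ i, IsCycleGraph (G.induce (Hs i)))
    (M : Set (Sym2 V)) (hM : M ⊆ G.edgeSet)
    (hmatch : ∀ e ∈ M, ∀ e' ∈ M, e ≠ e' → Disjoint (hyperOf G Hs e) (hyperOf G Hs e')) :
    ∀ i, ((SimpleGraph.fromEdgeSet (G.edgeSet \ M)).induce (Hs i)).Connected :=
  stmt6_general G r Hs hcyc M hmatch
end

section
/- With the habitat hypergraph B and bijection f as above (every habitat inducing a cycle): if F ⊆ E(G) is such that G[F][H] is connected for every habitat H, then M = E(B) \ f(F) is a matching in B (its hyperedges are pairwise disjoint). -/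
open SimpleGraph
open scoped Classical

/-! In a habitat `H` the cycle `G[H]` has exactly `|H|` edges (degree sum), while the connected
spanning subgraph `G[F][H]` of it has at least `|H| - 1`. So at most one edge of `G[H]` lies
outside `F`, and two distinct edges outside `F` never share a habitat. -/

namespace SimpleGraph

variable {W : Type*} [Finite W] {C K : SimpleGraph W}

lemma card_edgeSet_eq_card_of_ncard_neighborSet_eq_two
    (hC : ∀ v, (C.neighborSet v).ncard = 2) : Nat.card C.edgeSet = Nat.card W := by
  have := Fintype.ofFinite W
  have hdeg : ∀ v, C.degree v = 2 := fun v => by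
    rw [← hC v, ← card_neighborSet_eq_degree, Set.ncard_eq_toFinset_card', Set.toFinset_card]
  have hsum := C.sum_degrees_eq_twice_card_edges
  simp only [hdeg, Finset.sum_const, Finset.card_univ, smul_eq_mul] at hsum
  rw [Nat.card_eq_fintype_card, Nat.card_eq_fintype_card, ← edgeFinset_card]
  omega

lemma Connected.subsingleton_edgeSet_diff (hK : K.Connected) (hKC : K ≤ C)
    (hC : ∀ v, (C.neighborSet v).ncard = 2) : (C.edgeSet \ K.edgeSet).Subsingleton := by
  have hlower := hK.card_vert_le_card_edgeSet_add_one
  rw [← card_edgeSet_eq_card_of_ncard_neighborSet_eq_two hC, Nat.card_coe_set_eq,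
    Nat.card_coe_set_eq] at hlower
  rw [← Set.ncard_le_one_iff_subsingleton, Set.ncard_sdiff (edgeSet_subset_edgeSet.mpr hKC)]
  omega

end SimpleGraph

lemma edgesIn_diff_subset_image {V : Type*} (G : SimpleGraph V) (H : Set V) (F : Set (Sym2 V)) :
    edgesIn G H \ F ⊆ Sym2.map (↑) ''
      ((G.induce H).edgeSet \ ((fromEdgeSet F).induce H).edgeSet) := by
  rintro e ⟨⟨hG, hH⟩, hF⟩
  induction e using Sym2.ind with
  | _ a b =>
    refine ⟨s(⟨a, hH a (Sym2.mem_mk_left a b)⟩, ⟨b, hH b (Sym2.mem_mk_right a b)⟩), ?_, rfl⟩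
    simp_all

lemma subsingleton_edgesIn_diff {V : Type*} {G : SimpleGraph V} {H : Set V} [Finite H]
    (hH : IsCycleGraph (G.induce H)) {F : Set (Sym2 V)} (hF : F ⊆ G.edgeSet)
    (hconn : ((fromEdgeSet F).induce H).Connected) :
    (edgesIn G H \ F).Subsingleton := by
  have hle : (fromEdgeSet F).induce H ≤ G.induce H := fun _ _ huv => hF huv.1
  exact ((hconn.subsingleton_edgeSet_diff hle hH.2).image _).anti
    (edgesIn_diff_subset_image G H F)

/-- If every habitat induces a cycle and `G[F][Hᵢ]` is connected for every habitat,
then `E(G) \ F` is a matching in the habitat hypergraph: the corresponding hyperedges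
are pairwise disjoint. -/
theorem stmt7 {V : Type*} [Fintype V] (G : SimpleGraph V) (r : ℕ) (Hs : Fin r → Set V)
    (hcyc : ∀ i, IsCycleGraph (G.induce (Hs i)))
    (F : Set (Sym2 V)) (hF : F ⊆ G.edgeSet)
    (hconn : ∀ i, ((SimpleGraph.fromEdgeSet F).induce (Hs i)).Connected) :
    ∀ e ∈ G.edgeSet \ F, ∀ e' ∈ G.edgeSet \ F, e ≠ e' →
      Disjoint (hyperOf G Hs e) (hyperOf G Hs e') := by
  intro e he e' he' hne
  refine Set.disjoint_left.mpr fun i hi hi' => hne ?_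
  exact subsingleton_edgesIn_diff (hcyc i) hF (hconn i) ⟨hi, he.2⟩ ⟨hi', he'.2⟩
end

section
/- Let G be a graph, c edge costs, and habitats H₁,…,H_r each inducing a cycle, with habitat hypergraph B (edge weights w_B = c ∘ f⁻¹). Then F ⊆ E(G) is a minimum-cost edge set with G[F][H_i] connected and H_i ⊆ V(G[F]) for all i, if and only if E(B) \ f(F) is a maximum-weight matching in B. In particular, the minimum cost equals c(E(G)) minus the maximum weight of a matching in B. -/
open SimpleGraph
open scoped Classical

/-!
A spanning subgraph of a cycle is connected iff it misses at most one edge of the cycle: a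
connected graph on `n` vertices has at least `n - 1` edges, the cycle has exactly `n`, and no edge
of a cycle is a bridge. So `F` satisfies a habitat `H` inducing a cycle iff at most one edge of
`G[H]` lies outside `F`, i.e. iff no two edges of `E(G) \ F` lie in a common habitat; this says
that `E(G) \ F` is a matching of the habitat hypergraph. As `c(F) = c(E(G)) - c(E(G) \ F)`,
minimising the cost of a feasible `F` is maximising the weight of the matching `E(G) \ F`.
-/

section ComplementDuality

variable {α : Type*} {E : Set α} {w : Set α → ℕ} {P Q : Set α → Prop}

theorem minimal_iff_maximal_compl (hw : ∀ F ⊆ E, w F + w (E \ F) = w E)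
    (hPQ : ∀ F ⊆ E, P F ↔ Q (E \ F)) {F : Set α} (hF : F ⊆ E) :
    (P F ∧ ∀ F' ⊆ E, P F' → w F ≤ w F') ↔
      (Q (E \ F) ∧ ∀ M ⊆ E, Q M → w M ≤ w (E \ F)) := by
  refine and_congr (hPQ F hF) ?_
  have hwF := hw F hF
  constructor
  · intro hmin M hM hQM
    have := hmin (E \ M) Set.sdiff_subset <| (hPQ _ Set.sdiff_subset).mpr <| by
      rwa [Set.sdiff_sdiff_cancel_left hM]
    have := hw M hM
    omega
  · intro hmax F' hF' hPF'
    have := hmax (E \ F') Set.sdiff_subset ((hPQ F' hF').mp hPF')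
    have := hw F' hF'
    omega

theorem sInf_eq_sub_sSup_compl (hw : ∀ F ⊆ E, w F + w (E \ F) = w E)
    (hPQ : ∀ F ⊆ E, P F ↔ Q (E \ F)) (hQ : ∃ M ⊆ E, Q M) :
    sInf {k | ∃ F ⊆ E, P F ∧ w F = k} = w E - sSup {k | ∃ M ⊆ E, Q M ∧ w M = k} := by
  set S := {k | ∃ M ⊆ E, Q M ∧ w M = k}
  have hbdd : BddAbove S := ⟨w E, by
    rintro _ ⟨M, hM, -, rfl⟩
    exact (hw M hM).le.trans' le_self_add⟩
  obtain ⟨M₀, hM₀, hQM₀, hwM₀⟩ : sSup S ∈ S :=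
    Nat.sSup_mem (let ⟨M, hM, hQM⟩ := hQ; ⟨w M, M, hM, hQM, rfl⟩) hbdd
  have hfeas : w E - sSup S ∈ {k | ∃ F ⊆ E, P F ∧ w F = k} := by
    refine ⟨E \ M₀, Set.sdiff_subset, (hPQ _ Set.sdiff_subset).mpr ?_, ?_⟩
    · rwa [Set.sdiff_sdiff_cancel_left hM₀]
    · have := hw M₀ hM₀
      omega
  refine le_antisymm (Nat.sInf_le hfeas) (le_csInf ⟨_, hfeas⟩ ?_)
  rintro _ ⟨F, hF, hPF, rfl⟩
  have := le_csSup hbdd ⟨E \ F, Set.sdiff_subset, (hPQ F hF).mp hPF, rfl⟩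
  have := hw F hF
  omega

end ComplementDuality

theorem Set.sum_toFinset_add_sum_toFinset_sdiff {α β : Type*} [AddCommMonoid β] [DecidableEq α]
    {E F : Set α} [Fintype E] [Fintype F] [Fintype ↥(E \ F)] (h : F ⊆ E) (c : α → β) :
    ∑ e ∈ F.toFinset, c e + ∑ e ∈ (E \ F).toFinset, c e = ∑ e ∈ E.toFinset, c e := by
  rw [Set.toFinset_sdiff, add_comm]
  exact Finset.sum_sdiff (Set.toFinset_subset_toFinset.mpr h)

section CycleGraph

variable {W : Type*} {C D : SimpleGraph W}

theorem IsCycleGraph.isCycles (hC : IsCycleGraph C) : C.IsCycles := fun v _ => hC.2 v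

theorem IsCycleGraph.nontrivial (hC : IsCycleGraph C) : Nontrivial W := by
  obtain ⟨v⟩ := hC.1.nonempty
  obtain ⟨u, hu⟩ := Set.nonempty_of_ncard_ne_zero (s := C.neighborSet v) (by simp [hC.2 v])
  exact hu.nontrivial

theorem IsCycleGraph.card_edgeSet [Finite W] (hC : IsCycleGraph C) :
    Nat.card C.edgeSet = Nat.card W := by
  have := Fintype.ofFinite W
  have hdeg : ∀ v, C.degree v = 2 := fun v => by
    rw [← card_neighborSet_eq_degree, ← Nat.card_eq_fintype_card, Nat.card_coe_set_eq, hC.2 v]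
  have := C.sum_degrees_eq_twice_card_edges
  simp only [hdeg, Finset.sum_const, Finset.card_univ, smul_eq_mul] at this
  rw [Nat.card_eq_fintype_card, Nat.card_eq_fintype_card, ← edgeFinset_card]
  omega

theorem IsCycleGraph.connected_deleteEdges [Finite W] (hC : IsCycleGraph C) {e : Sym2 W}
    (he : e ∈ C.edgeSet) : (C.deleteEdges {e}).Connected := by
  induction e with | h u v =>
  exact hC.1.connected_delete_edge_of_not_isBridge fun hb =>
    hb (hC.isCycles.reachable_deleteEdges he)

theorem IsCycleGraph.connected_iff_subsingleton_edgeSet_sdiff [Finite W] (hC : IsCycleGraph C)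
    (hDC : D ≤ C) : D.Connected ↔ (C.edgeSet \ D.edgeSet).Subsingleton := by
  have hsub : D.edgeSet ⊆ C.edgeSet := edgeSet_mono hDC
  constructor
  · intro hD
    have := hD.card_vert_le_card_edgeSet_add_one
    rw [← hC.card_edgeSet, Nat.card_coe_set_eq, Nat.card_coe_set_eq] at this
    rw [← Set.ncard_le_one_iff_subsingleton, Set.ncard_sdiff hsub]
    omega
  · intro hs
    have hD : D = C.deleteEdges (C.edgeSet \ D.edgeSet) := edgeSet_injective <| by
      rw [edgeSet_deleteEdges, Set.sdiff_sdiff_cancel_left hsub]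
    rcases hs.eq_empty_or_singleton with he | ⟨e, he⟩
    · rw [hD, he, deleteEdges_empty]
      exact hC.1
    · rw [hD, he]
      exact hC.connected_deleteEdges (he.symm ▸ rfl : e ∈ C.edgeSet \ D.edgeSet).1

end CycleGraph

section Habitat

open Function

variable {V : Type*} {G : SimpleGraph V} {H : Set V} {F : Set (Sym2 V)}

theorem image_map_edgeSet_induce (K : SimpleGraph V) (H : Set V) :
    Sym2.map (↑) '' (K.induce H).edgeSet = edgesIn K H := by
  ext e
  constructor
  · rintro ⟨e', he', rfl⟩
    induction e' with | h x y =>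
    exact ⟨he', by simp⟩
  · induction e with | h x y =>
    rintro ⟨hxy, hH⟩
    exact ⟨s(⟨x, hH x (Sym2.mem_mk_left x y)⟩, ⟨y, hH y (Sym2.mem_mk_right x y)⟩), hxy,
      rfl⟩

theorem edgesIn_sdiff_edgesIn_fromEdgeSet :
    edgesIn G H \ edgesIn (fromEdgeSet F) H = edgesIn G H \ F := by
  ext e
  simp only [edgesIn, Set.mem_sdiff, Set.mem_ofPred_eq, edgeSet_fromEdgeSet, Sym2.mem_diagSet]
  grind [G.not_isDiag_of_mem_edgeSet]

theorem satisfiesHab_iff_connected [Nontrivial H] :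
    SatisfiesHab F H ↔ ((fromEdgeSet F).induce H).Connected := by
  refine ⟨And.right, fun hD => ⟨fun v hv => ?_, hD⟩⟩
  obtain ⟨u, hu⟩ := hD.preconnected.exists_adj_of_nontrivial ⟨v, hv⟩
  exact ⟨s(v, u), ((fromEdgeSet_adj _).mp hu).1, Sym2.mem_mk_left _ _⟩

theorem satisfiesHab_iff_subsingleton [Finite V] (hcyc : IsCycleGraph (G.induce H))
    (hF : F ⊆ G.edgeSet) : SatisfiesHab F H ↔ (edgesIn G H \ F).Subsingleton := by
  have := hcyc.nontrivial
  have hDC : (fromEdgeSet F).induce H ≤ G.induce H := fun x y hxy =>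
    hF ((fromEdgeSet_adj _).mp hxy).1
  rw [satisfiesHab_iff_connected, hcyc.connected_iff_subsingleton_edgeSet_sdiff hDC,
    ← (Sym2.map.injective Subtype.val_injective).subsingleton_image_iff,
    Set.image_sdiff (Sym2.map.injective Subtype.val_injective), image_map_edgeSet_induce,
    image_map_edgeSet_induce, edgesIn_sdiff_edgesIn_fromEdgeSet]

theorem pairwise_disjoint_hyperOf_iff {r : ℕ} (Hs : Fin r → Set V) (M : Set (Sym2 V)) :
    M.Pairwise (Disjoint on hyperOf G Hs) ↔ ∀ i, (edgesIn G (Hs i) ∩ M).Subsingleton := by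
  simp only [Set.Pairwise, onFun, Set.disjoint_left, hyperOf, Set.mem_ofPred_eq,
    Set.Subsingleton, Set.mem_inter_iff]
  grind

theorem forall_satisfiesHab_iff_pairwise_disjoint [Finite V] {r : ℕ} {Hs : Fin r → Set V}
    (hcyc : ∀ i, IsCycleGraph (G.induce (Hs i))) (hF : F ⊆ G.edgeSet) :
    (∀ i, SatisfiesHab F (Hs i)) ↔ (G.edgeSet \ F).Pairwise (Disjoint on hyperOf G Hs) := by
  rw [pairwise_disjoint_hyperOf_iff]
  refine forall_congr' fun i => ?_
  rw [satisfiesHab_iff_subsingleton (hcyc i) hF, ← Set.inter_sdiff_assoc,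
    Set.inter_eq_left.mpr fun _ he => he.1]

end Habitat

/-- If every habitat induces a cycle, then `F ⊆ E(G)` is a minimum-cost edge set
satisfying all habitats iff `E(G) \ F` is a maximum-weight matching in the habitat
hypergraph; in particular the minimum cost equals `c(E(G))` minus the maximum weight
of a matching. -/
theorem stmt8 {V : Type*} [Fintype V] (G : SimpleGraph V) (r : ℕ) (Hs : Fin r → Set V)
    (c : Sym2 V → ℕ)
    (hcyc : ∀ i, IsCycleGraph (G.induce (Hs i)))
    (F : Set (Sym2 V)) (hF : F ⊆ G.edgeSet) :
    (((∀ i, SatisfiesHab F (Hs i)) ∧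
        ∀ F' : Set (Sym2 V), F' ⊆ G.edgeSet → (∀ i, SatisfiesHab F' (Hs i)) →
          ∑ e ∈ F.toFinset, c e ≤ ∑ e ∈ F'.toFinset, c e) ↔
      ((∀ e ∈ G.edgeSet \ F, ∀ e' ∈ G.edgeSet \ F, e ≠ e' →
          Disjoint (hyperOf G Hs e) (hyperOf G Hs e')) ∧
        ∀ M : Set (Sym2 V), M ⊆ G.edgeSet →
          (∀ e ∈ M, ∀ e' ∈ M, e ≠ e' → Disjoint (hyperOf G Hs e) (hyperOf G Hs e')) →
          ∑ e ∈ M.toFinset, c e ≤ ∑ e ∈ (G.edgeSet \ F).toFinset, c e)) ∧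
    sInf {k : ℕ | ∃ F' : Set (Sym2 V), F' ⊆ G.edgeSet ∧ (∀ i, SatisfiesHab F' (Hs i)) ∧
        ∑ e ∈ F'.toFinset, c e = k}
      = ∑ e ∈ G.edgeSet.toFinset, c e -
        sSup {k : ℕ | ∃ M : Set (Sym2 V), M ⊆ G.edgeSet ∧
          (∀ e ∈ M, ∀ e' ∈ M, e ≠ e' → Disjoint (hyperOf G Hs e) (hyperOf G Hs e')) ∧
          ∑ e ∈ M.toFinset, c e = k} := by
  let w : Set (Sym2 V) → ℕ := fun S => ∑ e ∈ S.toFinset, c e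
  -- `convert` identifies the different `Fintype` instances behind the `toFinset`s.
  have hw : ∀ F ⊆ G.edgeSet, w F + w (G.edgeSet \ F) = w G.edgeSet := fun F hF => by
    convert Set.sum_toFinset_add_sum_toFinset_sdiff hF c
  let P : Set (Sym2 V) → Prop := fun F => ∀ i, SatisfiesHab F (Hs i)
  let Q : Set (Sym2 V) → Prop := fun M =>
    ∀ e ∈ M, ∀ e' ∈ M, e ≠ e' → Disjoint (hyperOf G Hs e) (hyperOf G Hs e')
  have hPQ : ∀ F ⊆ G.edgeSet, P F ↔ Q (G.edgeSet \ F) :=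
    fun F hF => forall_satisfiesHab_iff_pairwise_disjoint hcyc hF
  constructor
  · convert minimal_iff_maximal_compl hw hPQ hF
  · convert sInf_eq_sub_sSup_compl hw hPQ ⟨∅, Set.empty_subset _, Set.pairwise_empty _⟩
end

section
/- Let G be a graph with edge costs c, and let F₁,…,F_r be edge sets where F_i satisfies habitat H_i (which induces a cycle), each F_i obtained by taking all but one edge of the cycle G[H_i]. Let F* = ⋃ F*_i be any optimal solution with F*_i ⊆ E(G[H_i]) satisfying H_i. Then c(⋃_{i=1}^r F_i) ≤ c(F*) + r · c_max, where c_max = max_{e∈E} c(e). -/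
open SimpleGraph
open scoped Classical

/-!
A connected spanning subgraph of a cycle on `n` vertices has at least `n - 1` of its `n` edges, so
the part `F i \ Fs i` of each `F i` outside the optimal solution is at most one edge, of cost at
most `c_max`. Hence `⋃ F i` exceeds `⋃ Fs i` by at most `r` edges.
-/

lemma IsCycleGraph.ncard_edgeSet {W : Type*} [Finite W] {G : SimpleGraph W}
    (h : IsCycleGraph G) : G.edgeSet.ncard = Nat.card W := by
  have := Fintype.ofFinite W
  have hdeg : ∀ v, G.degree v = 2 := fun v => by
    rw [← card_neighborSet_eq_degree, ← Nat.card_eq_fintype_card, Nat.card_coe_set_eq, h.2 v]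
  have hsum := G.sum_degrees_eq_twice_card_edges
  simp only [hdeg, Finset.sum_const, Finset.card_univ, smul_eq_mul] at hsum
  rw [Set.ncard_eq_toFinset_card', ← edgeFinset, Nat.card_eq_fintype_card]
  omega

lemma SimpleGraph.Connected.ncard_edgeSet_sdiff_le_one {W : Type*} [Finite W]
    {G G' : SimpleGraph W} (hG' : G'.Connected) (hle : G' ≤ G)
    (hcard : G.edgeSet.ncard ≤ Nat.card W) : (G.edgeSet \ G'.edgeSet).ncard ≤ 1 := by
  have hG'card := hG'.card_vert_le_card_edgeSet_add_one
  have hsub : G'.edgeSet ⊆ G.edgeSet := edgeSet_mono hle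
  rw [Set.ncard_sdiff hsub, ← Nat.card_coe_set_eq G'.edgeSet]
  omega

lemma image_edgeSet_induce {V : Type*} (G : SimpleGraph V) (H : Set V) :
    Sym2.map (Subtype.val : H → V) '' (G.induce H).edgeSet = edgesIn G H := by
  ext e
  constructor
  · rintro ⟨e', he', rfl⟩
    induction e' using Sym2.ind with
    | _ a b =>
      refine ⟨by simpa using he', fun v hv => ?_⟩
      rcases Sym2.mem_map.1 hv with ⟨w, -, rfl⟩
      exact w.2
  · rintro ⟨hG, hH⟩
    induction e using Sym2.ind with
    | _ a b =>
      exact ⟨s(⟨a, hH a (Sym2.mem_mk_left a b)⟩, ⟨b, hH b (Sym2.mem_mk_right a b)⟩),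
        by simpa using hG, rfl⟩

lemma edgesIn_fromEdgeSet {V : Type*} {G : SimpleGraph V} {H : Set V} {S : Set (Sym2 V)}
    (hS : S ⊆ edgesIn G H) : edgesIn (fromEdgeSet S) H = S := by
  ext e
  refine ⟨fun he => (edgeSet_fromEdgeSet S ▸ he.1).1, fun he => ⟨?_, (hS he).2⟩⟩
  rw [edgeSet_fromEdgeSet]
  exact ⟨he, G.not_isDiag_of_mem_edgeSet (hS he).1⟩

lemma ncard_edgesIn_sdiff_le_one {V : Type*} {G : SimpleGraph V} {H : Set V} [Finite H]
    {S : Set (Sym2 V)} (hcyc : IsCycleGraph (G.induce H)) (hS : S ⊆ edgesIn G H)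
    (hconn : ((fromEdgeSet S).induce H).Connected) : (edgesIn G H \ S).ncard ≤ 1 := by
  have hle : (fromEdgeSet S).induce H ≤ G.induce H :=
    comap_monotone _ ((fromEdgeSet_le G).2 fun e he => (hS he.1).1)
  rw [← image_edgeSet_induce G H, ← edgesIn_fromEdgeSet hS, ← image_edgeSet_induce,
    ← Set.image_sdiff (Sym2.map.injective Subtype.val_injective),
    Set.ncard_image_of_injective _ (Sym2.map.injective Subtype.val_injective)]
  exact hconn.ncard_edgeSet_sdiff_le_one hle hcyc.ncard_edgeSet.le

lemma sum_toFinset_iUnion_le_add_card_mul {α ι : Type*} [Fintype α] [DecidableEq α] [Fintype ι]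
    (F S : ι → Set α) (c : α → ℕ) (M : ℕ) (hdiff : ∀ i, (F i \ S i).ncard ≤ 1)
    (hM : ∀ i, ∀ e ∈ F i, c e ≤ M) :
    ∑ e ∈ (⋃ i, F i).toFinset, c e ≤
      ∑ e ∈ (⋃ i, S i).toFinset, c e + Fintype.card ι * M := by
  set D := Finset.univ.biUnion fun i => (F i \ S i).toFinset
  have hcover : (⋃ i, F i).toFinset ⊆ (⋃ i, S i).toFinset ∪ D := by
    intro e he
    obtain ⟨i, hi⟩ := Set.mem_iUnion.1 (Set.mem_toFinset.1 he)
    by_cases hS : e ∈ ⋃ j, S j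
    · exact Finset.mem_union_left _ (Set.mem_toFinset.2 hS)
    · exact Finset.mem_union_right _ (Finset.mem_biUnion.2 ⟨i, Finset.mem_univ i,
        Set.mem_toFinset.2 ⟨hi, fun h => hS (Set.mem_iUnion.2 ⟨i, h⟩)⟩⟩)
  have hDcard : D.card ≤ Fintype.card ι * 1 :=
    Finset.card_biUnion_le_card_mul _ _ _ fun i _ => by
      rw [← Set.ncard_eq_toFinset_card']; exact hdiff i
  have hDsum : ∑ e ∈ D, c e ≤ D.card • M := Finset.sum_le_card_nsmul _ _ _ fun e he => by
    obtain ⟨i, -, he⟩ := Finset.mem_biUnion.1 he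
    exact hM i e (Set.mem_toFinset.1 he).1
  calc ∑ e ∈ (⋃ i, F i).toFinset, c e
      ≤ ∑ e ∈ (⋃ i, S i).toFinset ∪ D, c e := Finset.sum_le_sum_of_subset hcover
    _ ≤ ∑ e ∈ (⋃ i, S i).toFinset, c e + ∑ e ∈ D, c e := by
      rw [← Finset.sum_union_inter]; exact Nat.le_add_right _ _
    _ ≤ ∑ e ∈ (⋃ i, S i).toFinset, c e + Fintype.card ι * M :=
      Nat.add_le_add_left (hDsum.trans (Nat.mul_le_mul_right M (by simpa using hDcard))) _

theorem stmt11_general {V : Type*} [Fintype V] (G : SimpleGraph V) (c : Sym2 V → ℕ)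
    (r : ℕ) (Hs : Fin r → Set V)
    (hcyc : ∀ i, IsCycleGraph (G.induce (Hs i)))
    (F Fs : Fin r → Set (Sym2 V))
    (hFsub : ∀ i, F i ⊆ edgesIn G (Hs i))
    (hFssub : ∀ i, Fs i ⊆ edgesIn G (Hs i))
    (hFssat : ∀ i, SatisfiesHab (Fs i) (Hs i)) :
    ∑ e ∈ (⋃ i, F i).toFinset, c e ≤
      ∑ e ∈ (⋃ i, Fs i).toFinset, c e + r * G.edgeSet.toFinset.sup c := by
  have hdiff : ∀ i, (F i \ Fs i).ncard ≤ 1 := fun i =>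
    (Set.ncard_le_ncard (Set.sdiff_subset_sdiff_left (hFsub i))).trans
      (ncard_edgesIn_sdiff_le_one (hcyc i) (hFssub i) (hFssat i).2)
  have hcmax : ∀ i, ∀ e ∈ F i, c e ≤ G.edgeSet.toFinset.sup c := fun i e he =>
    Finset.le_sup (Set.mem_toFinset.2 (hFsub i he).1)
  simpa using sum_toFinset_iUnion_le_add_card_mul F Fs c _ hdiff hcmax

/-- Additive approximation guarantee: if each `F i` satisfies the cycle habitat `Hs i`
by taking all but at most one edge of the cycle `G[Hs i]`, and `Fs i ⊆ E(G[Hs i])`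
also satisfies `Hs i` (e.g. pieces of an optimal solution), then
`c(⋃ F i) ≤ c(⋃ Fs i) + r · c_max` where `c_max = max_{e ∈ E} c(e)`. -/
theorem stmt11 {V : Type*} [Fintype V] (G : SimpleGraph V) (c : Sym2 V → ℕ)
    (r : ℕ) (Hs : Fin r → Set V)
    (hcyc : ∀ i, IsCycleGraph (G.induce (Hs i)))
    (F Fs : Fin r → Set (Sym2 V))
    (hFsub : ∀ i, F i ⊆ edgesIn G (Hs i))
    (hFone : ∀ i, (edgesIn G (Hs i) \ F i).ncard ≤ 1)
    (hFsat : ∀ i, SatisfiesHab (F i) (Hs i))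
    (hFssub : ∀ i, Fs i ⊆ edgesIn G (Hs i))
    (hFssat : ∀ i, SatisfiesHab (Fs i) (Hs i)) :
    ∑ e ∈ (⋃ i, F i).toFinset, c e ≤
      ∑ e ∈ (⋃ i, Fs i).toFinset, c e + r * G.edgeSet.toFinset.sup c :=
  stmt11_general G c r Hs hcyc F Fs hFsub hFssub hFssat
end
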